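/- Define recursively for finite graphs Ĝ, vertices v, t ∈ ℕ: Φ_Ĝ(v,t) = 1 if t = 0 or v is isolated; otherwise Φ_Ĝ(v,t) = (1 + λ·Σ_{u ∈ N(v)} Φ_{Ĝ_0}(u, t-1))^{-1} where Ĝ_0 is induced by deleting v. Define Ψ identically except Ψ_Ĝ(v,0) = 0. Then for the monomer-dimer Gibbs measure with activity λ: Ψ_G(v,2t) ≤ P_G(v ∉ M) ≤ Φ_G(v,2t) and Φ_G(v,2t+1) ≤ P_G(v ∉ M) ≤ Ψ_G(v,2t+1) for all finite graphs G, vertices v, and t ∈ ℕ. -/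

import Mathlib

/-! Splitting the matchings of the induced subgraph on `A` into those avoiding `v` and, for each
neighbour `u`, those containing the edge `vu` gives `Z(A) = Z(A \ v) + λ ∑ᵤ Z(A \ {v, u})`.
Hence `P_A(v ∉ M)` obeys exactly the recursion defining `mdRec`, and `0 ≤ P ≤ 1` supplies the
bases `0` and `1` at depth `0`. Since `x ↦ (1 + λ ∑ x)⁻¹` is antitone on nonnegative vectors,
each level of the recursion exchanges lower and upper bounds, whence the alternation with parity. -/

open Finset

/-- The recursively defined quantity `Φ` (for `base = 1`) resp. `Ψ` (for `base = 0`)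
of the monomer-dimer computation-tree recursion: `F(0, A, v) = base`; for `t > 0`,
`F(t, A, v) = 1` if `v` has no neighbors in `A`, and otherwise
`F(t, A, v) = (1 + λ · Σ_{u ∈ N(v) ∩ A} F(t-1, A \ {v}, u))⁻¹`. -/
noncomputable def mdRec {V : Type*} [Fintype V] [DecidableEq V] (G : SimpleGraph V)
    [DecidableRel G.Adj] (lam base : ℝ) : ℕ → Finset V → V → ℝ
  | 0, _, _ => base
  | t + 1, A, v =>
    if (G.neighborFinset v ∩ A.erase v) = ∅ then 1
    else (1 + lam * ∑ u ∈ G.neighborFinset v ∩ A.erase v,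
            mdRec G lam base t (A.erase v) u)⁻¹

/-- Monomer-dimer partition function of the subgraph of `G` induced on `A`. -/
noncomputable def mdZ {V : Type*} [Fintype V] [DecidableEq V] (G : SimpleGraph V)
    [DecidableRel G.Adj] (lam : ℝ) (A : Finset V) : ℝ :=
  ∑ M ∈ G.edgeFinset.powerset.filter
      (fun M => (∀ e ∈ M, ∀ x : V, x ∈ e → x ∈ A) ∧
        ∀ e ∈ M, ∀ f ∈ M, e ≠ f → ∀ x : V, x ∈ e → x ∉ f),
    lam ^ M.card

/-- Probability under the monomer-dimer Gibbs measure on the subgraph induced on `A`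
that the random matching does not cover `v`. -/
noncomputable def mdPnot {V : Type*} [Fintype V] [DecidableEq V] (G : SimpleGraph V)
    [DecidableRel G.Adj] (lam : ℝ) (A : Finset V) (v : V) : ℝ :=
  (∑ M ∈ G.edgeFinset.powerset.filter
      (fun M => (∀ e ∈ M, ∀ x : V, x ∈ e → x ∈ A) ∧
        (∀ e ∈ M, ∀ f ∈ M, e ≠ f → ∀ x : V, x ∈ e → x ∉ f) ∧ ∀ e ∈ M, v ∉ e),
    lam ^ M.card) / mdZ G lam A


section MonomerDimer

variable {V : Type*} [Fintype V] [DecidableEq V] (G : SimpleGraph V) [DecidableRel G.Adj]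

def inducedMatchings (A : Finset V) : Finset (Finset (Sym2 V)) :=
  G.edgeFinset.powerset.filter
    (fun M => (∀ e ∈ M, ∀ x : V, x ∈ e → x ∈ A) ∧
      ∀ e ∈ M, ∀ f ∈ M, e ≠ f → ∀ x : V, x ∈ e → x ∉ f)

variable {G}

theorem mem_inducedMatchings {A : Finset V} {M : Finset (Sym2 V)} :
    M ∈ inducedMatchings G A ↔ M ⊆ G.edgeFinset ∧ (∀ e ∈ M, ∀ x : V, x ∈ e → x ∈ A) ∧
      ∀ e ∈ M, ∀ f ∈ M, e ≠ f → ∀ x : V, x ∈ e → x ∉ f := by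
  rw [inducedMatchings, mem_filter, mem_powerset]

theorem mdZ_eq_sum (lam : ℝ) (A : Finset V) :
    mdZ G lam A = ∑ M ∈ inducedMatchings G A, lam ^ #M := rfl

theorem one_le_mdZ {lam : ℝ} (hlam : 0 ≤ lam) (A : Finset V) : 1 ≤ mdZ G lam A := by
  have hempty : ∅ ∈ inducedMatchings G A := by simp [mem_inducedMatchings]
  rw [mdZ_eq_sum]
  simpa using single_le_sum (fun M _ => pow_nonneg hlam #M) hempty

theorem inducedMatchings_erase (A : Finset V) (v : V) :
    inducedMatchings G (A.erase v) = (inducedMatchings G A).filter (fun M => ∀ e ∈ M, v ∉ e) := by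
  ext M
  simp only [mem_filter, mem_inducedMatchings, mem_erase]
  constructor
  · rintro ⟨hG, hA, hdisj⟩
    exact ⟨⟨hG, fun e he x hx => (hA e he x hx).2, hdisj⟩, fun e he hv => (hA e he v hv).1 rfl⟩
  · rintro ⟨⟨hG, hA, hdisj⟩, hv⟩
    exact ⟨hG, fun e he x hx => ⟨fun hxv => hv e he (hxv ▸ hx), hA e he x hx⟩, hdisj⟩

theorem mdPnot_eq_div (lam : ℝ) (A : Finset V) (v : V) :
    mdPnot G lam A v = mdZ G lam (A.erase v) / mdZ G lam A := by
  rw [mdPnot, mdZ_eq_sum _ (A.erase v), inducedMatchings_erase, inducedMatchings, filter_filter]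
  simp only [and_assoc]

theorem filter_mem_inducedMatchings_eq_image {A : Finset V} {v u : V} (hv : v ∈ A)
    (hu : u ∈ G.neighborFinset v ∩ A.erase v) :
    (inducedMatchings G A).filter (s(v, u) ∈ ·)
      = (inducedMatchings G ((A.erase v).erase u)).image (insert s(v, u)) := by
  simp only [mem_inter, SimpleGraph.mem_neighborFinset, mem_erase] at hu
  obtain ⟨hadj, -, huA⟩ := hu
  have hvu : s(v, u) ∈ G.edgeFinset := G.mem_edgeFinset.mpr hadj
  ext M
  simp only [mem_filter, mem_image, mem_inducedMatchings, mem_erase]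
  constructor
  · rintro ⟨⟨hG, hA, hdisj⟩, he⟩
    have hfar : ∀ f ∈ M.erase s(v, u), ∀ x ∈ f, x ≠ v ∧ x ≠ u := fun f hf x hx => by
      obtain ⟨hne, hf⟩ := mem_erase.mp hf
      exact ⟨fun h => hdisj _ he f hf hne.symm v (by simp) (h ▸ hx),
        fun h => hdisj _ he f hf hne.symm u (by simp) (h ▸ hx)⟩
    refine ⟨M.erase s(v, u), ⟨(erase_subset _ _).trans hG, fun f hf x hx => ?_,
      fun e he f hf => hdisj e (mem_of_mem_erase he) f (mem_of_mem_erase hf)⟩, insert_erase he⟩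
    exact ⟨(hfar f hf x hx).2, (hfar f hf x hx).1, hA f (mem_of_mem_erase hf) x hx⟩
  · rintro ⟨M, ⟨hG, hA, hdisj⟩, rfl⟩
    have hfar : ∀ x ∈ s(v, u), ∀ f ∈ M, x ∉ f := by
      rintro x hx f hf hxf
      obtain ⟨hxu, hxv, -⟩ := hA f hf x hxf
      rcases Sym2.mem_iff.mp hx with rfl | rfl <;> contradiction
    refine ⟨⟨insert_subset hvu hG, ?_, ?_⟩, mem_insert_self _ _⟩
    · intro f hf x hx
      rcases mem_insert.mp hf with rfl | hf
      · rcases Sym2.mem_iff.mp hx with rfl | rfl <;> assumption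
      · exact (hA f hf x hx).2.2
    · intro e he f hf hne x hxe
      rcases mem_insert.mp he with rfl | he <;> rcases mem_insert.mp hf with rfl | hf
      · exact absurd rfl hne
      · exact hfar x hxe f hf
      · exact fun hxf => hfar x hxf e he hxe
      · exact hdisj e he f hf hne x hxe

theorem filter_exists_mem_inducedMatchings_eq_biUnion (A : Finset V) (v : V) :
    (inducedMatchings G A).filter (fun M => ¬ ∀ e ∈ M, v ∉ e)
      = (G.neighborFinset v ∩ A.erase v).biUnion
          (fun u => (inducedMatchings G A).filter (s(v, u) ∈ ·)) := by
  ext M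
  simp only [mem_filter, mem_biUnion, mem_inter, SimpleGraph.mem_neighborFinset, mem_erase]
  constructor
  · rintro ⟨hM, hcov⟩
    push Not at hcov
    obtain ⟨e, he, hve⟩ := hcov
    obtain ⟨u, rfl⟩ := Sym2.mem_iff_exists.mp hve
    have hadj : G.Adj v u := G.mem_edgeFinset.mp ((mem_inducedMatchings.mp hM).1 he)
    exact ⟨u, ⟨hadj, hadj.ne', (mem_inducedMatchings.mp hM).2.1 _ he u (by simp)⟩, hM, he⟩
  · rintro ⟨u, -, hM, he⟩
    exact ⟨hM, fun h => h _ he (by simp)⟩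

theorem pairwiseDisjoint_filter_mem_inducedMatchings (A : Finset V) (v : V) (s : Set V) :
    s.PairwiseDisjoint (fun u => (inducedMatchings G A).filter (s(v, u) ∈ ·)) := by
  intro u₁ _ u₂ _ hne
  refine disjoint_filter.mpr fun M hM h₁ h₂ => ?_
  exact (mem_inducedMatchings.mp hM).2.2 _ h₁ _ h₂ (fun h => hne (Sym2.congr_right.mp h)) v
    (by simp) (by simp)

theorem mdZ_eq_mdZ_erase_add {lam : ℝ} {A : Finset V} {v : V} (hv : v ∈ A) :
    mdZ G lam A = mdZ G lam (A.erase v)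
      + lam * ∑ u ∈ G.neighborFinset v ∩ A.erase v, mdZ G lam ((A.erase v).erase u) := by
  rw [mdZ_eq_sum, ← sum_filter_add_sum_filter_not _ (fun M => ∀ e ∈ M, v ∉ e),
    ← inducedMatchings_erase, ← mdZ_eq_sum, filter_exists_mem_inducedMatchings_eq_biUnion,
    sum_biUnion (pairwiseDisjoint_filter_mem_inducedMatchings A v _), mul_sum]
  congr 1
  refine sum_congr rfl fun u hu => ?_
  have hfar : ∀ M ∈ inducedMatchings G ((A.erase v).erase u), s(v, u) ∉ M := fun M hM he =>
    notMem_erase v A (mem_of_mem_erase ((mem_inducedMatchings.mp hM).2.1 _ he v (by simp)))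
  rw [filter_mem_inducedMatchings_eq_image hv hu,
    sum_image fun M hM M' hM' h => by
      simpa [erase_insert (hfar M hM), erase_insert (hfar M' hM')] using congrArg (·.erase s(v, u)) h,
    mdZ_eq_sum, mul_sum]
  exact sum_congr rfl fun M hM => by rw [card_insert_of_notMem (hfar M hM), pow_succ, mul_comm]

theorem mdPnot_eq_inv {lam : ℝ} (hlam : 0 ≤ lam) {A : Finset V} {v : V} (hv : v ∈ A) :
    mdPnot G lam A v
      = (1 + lam * ∑ u ∈ G.neighborFinset v ∩ A.erase v, mdPnot G lam (A.erase v) u)⁻¹ := by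
  have hZ : mdZ G lam (A.erase v) ≠ 0 := (zero_lt_one.trans_le (one_le_mdZ hlam _)).ne'
  simp_rw [mdPnot_eq_div, ← sum_div, mul_div_assoc', one_add_div hZ, inv_div]
  rw [← mdZ_eq_mdZ_erase_add hv]

theorem mdPnot_nonneg {lam : ℝ} (hlam : 0 ≤ lam) (A : Finset V) (v : V) :
    0 ≤ mdPnot G lam A v := by
  rw [mdPnot_eq_div]
  exact div_nonneg (zero_le_one.trans (one_le_mdZ hlam _)) (zero_le_one.trans (one_le_mdZ hlam _))

theorem mdRec_succ (lam base : ℝ) (t : ℕ) (A : Finset V) (v : V) :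
    mdRec G lam base (t + 1) A v
      = (1 + lam * ∑ u ∈ G.neighborFinset v ∩ A.erase v, mdRec G lam base t (A.erase v) u)⁻¹ := by
  rw [mdRec]
  split_ifs with h <;> simp [h]

theorem mdRec_nonneg {lam base : ℝ} (hlam : 0 ≤ lam) (hbase : 0 ≤ base) (t : ℕ) (A : Finset V)
    (v : V) : 0 ≤ mdRec G lam base t A v := by
  induction t generalizing A v with
  | zero => exact hbase
  | succ t ih =>
    rw [mdRec_succ]
    have := sum_nonneg fun u (_ : u ∈ G.neighborFinset v ∩ A.erase v) => ih (A.erase v) u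
    positivity

theorem inv_one_add_mul_sum_le_inv_one_add_mul_sum {ι : Type*} {s : Finset ι} {lam : ℝ}
    {f g : ι → ℝ} (hlam : 0 ≤ lam) (hf : ∀ i ∈ s, 0 ≤ f i) (hfg : ∀ i ∈ s, f i ≤ g i) :
    (1 + lam * ∑ i ∈ s, g i)⁻¹ ≤ (1 + lam * ∑ i ∈ s, f i)⁻¹ :=
  inv_anti₀ (add_pos_of_pos_of_nonneg one_pos (mul_nonneg hlam (sum_nonneg hf)))
    (by gcongr with i hi; exact hfg i hi)

variable (G) in
def MdRecBrackets (lam lo hi : ℝ) (t : ℕ) : Prop :=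
  ∀ A : Finset V, ∀ v ∈ A,
    mdRec G lam lo t A v ≤ mdPnot G lam A v ∧ mdPnot G lam A v ≤ mdRec G lam hi t A v

theorem mdRecBrackets_zero {lam : ℝ} (hlam : 0 ≤ lam) : MdRecBrackets G lam 0 1 0 := by
  intro A v hv
  refine ⟨mdPnot_nonneg hlam A v, ?_⟩
  rw [mdPnot_eq_inv hlam hv]
  exact inv_le_one_of_one_le₀
    (le_add_of_nonneg_right (mul_nonneg hlam (sum_nonneg fun u _ => mdPnot_nonneg hlam _ u)))

theorem MdRecBrackets.succ {lam lo hi : ℝ} {t : ℕ} (hlam : 0 ≤ lam) (hlo : 0 ≤ lo)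
    (h : MdRecBrackets G lam lo hi t) : MdRecBrackets G lam hi lo (t + 1) := by
  intro A v hv
  have hB : ∀ u ∈ G.neighborFinset v ∩ A.erase v, u ∈ A.erase v := fun u hu => (mem_inter.mp hu).2
  rw [mdRec_succ, mdRec_succ, mdPnot_eq_inv hlam hv]
  exact ⟨inv_one_add_mul_sum_le_inv_one_add_mul_sum hlam (fun u _ => mdPnot_nonneg hlam _ u)
      fun u hu => (h _ u (hB u hu)).2,
    inv_one_add_mul_sum_le_inv_one_add_mul_sum hlam (fun u _ => mdRec_nonneg hlam hlo t _ u)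
      fun u hu => (h _ u (hB u hu)).1⟩

theorem mdRecBrackets_two_mul {lam : ℝ} (hlam : 0 ≤ lam) (t : ℕ) :
    MdRecBrackets G lam 0 1 (2 * t) ∧ MdRecBrackets G lam 1 0 (2 * t + 1) := by
  induction t with
  | zero => exact ⟨mdRecBrackets_zero hlam, (mdRecBrackets_zero hlam).succ hlam le_rfl⟩
  | succ t ih =>
    have h := ih.2.succ hlam zero_le_one
    exact ⟨h, h.succ hlam le_rfl⟩

end MonomerDimer

/-- With `Φ = mdRec G λ 1` and `Ψ = mdRec G λ 0`, for every finite graph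
`G`, vertex `v` and `t ∈ ℕ`: `Ψ(2t) ≤ P_G(v ∉ M) ≤ Φ(2t)` and
`Φ(2t+1) ≤ P_G(v ∉ M) ≤ Ψ(2t+1)`. -/
theorem monomer_dimer_recursive_bounds {V : Type*} [Fintype V] [DecidableEq V]
    (G : SimpleGraph V) [DecidableRel G.Adj] (lam : ℝ) (hlam : 0 < lam)
    (v : V) (t : ℕ) :
    (mdRec G lam 0 (2 * t) Finset.univ v ≤ mdPnot G lam Finset.univ v
      ∧ mdPnot G lam Finset.univ v ≤ mdRec G lam 1 (2 * t) Finset.univ v)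
    ∧ (mdRec G lam 1 (2 * t + 1) Finset.univ v ≤ mdPnot G lam Finset.univ v
      ∧ mdPnot G lam Finset.univ v ≤ mdRec G lam 0 (2 * t + 1) Finset.univ v) := by
  obtain ⟨heven, hodd⟩ := mdRecBrackets_two_mul (G := G) hlam.le t
  exact ⟨heven univ v (mem_univ v), hodd univ v (mem_univ v)⟩
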